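/- arXiv:1405.4560 — 5 statements merged into one kernel-verified Lean document; each statement's English description precedes it below -/
import Mathlib

section
/- Let S be a finite set, P : S × S → [0,1] a stochastic matrix, and A = (S, Q, Q0, δ, F) an NFA whose alphabet is S. Define the directed product graph with vertex set S × Q and an edge from (s,q) to (s',q') if and only if P(s,s') > 0 and q' ∈ δ(q,s'). Suppose that from the vertex (s,q) no vertex (t,p) with p ∈ F is reachable in this graph. Then μ_s({x ∈ S^ω : some nonempty finite prefix of x belongs to L(A,q)}) = 0. -/
/-- A nondeterministic automaton over alphabet `σ` with state set `Q`. -/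
structure NFA' (σ Q : Type*) where
  start : Set Q
  step : Q → σ → Set Q
  accept : Set Q

namespace NFA'

variable {σ Q : Type*}

/-- `r 0, r 1, …, r w.length` is a run of `A` on the finite word `w`. -/
def IsRunOn (A : NFA' σ Q) (w : List σ) (r : ℕ → Q) : Prop :=
  r 0 ∈ A.start ∧ ∀ i (h : i < w.length), r (i + 1) ∈ A.step (r i) w[i]

/-- An accepting run of `A` on the finite word `w`. -/
def IsAccRunOn (A : NFA' σ Q) (w : List σ) (r : ℕ → Q) : Prop :=
  A.IsRunOn w r ∧ r w.length ∈ A.accept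

/-- `A` is unambiguous (as an NFA): every finite word has at most one accepting run. -/
def Unambiguous (A : NFA' σ Q) : Prop :=
  ∀ w r₁ r₂, A.IsAccRunOn w r₁ → A.IsAccRunOn w r₂ → ∀ i ≤ w.length, r₁ i = r₂ i

/-- The automaton `A` with its initial-state set replaced by `{q}`. -/
def restart (A : NFA' σ Q) (q : Q) : NFA' σ Q :=
  ⟨{q}, A.step, A.accept⟩

/-- `L(A,q)`: the language of finite words accepted by `A` with initial state `q`. -/
def LangFrom (A : NFA' σ Q) (q : Q) : Set (List σ) :=
  { w | ∃ r, (A.restart q).IsAccRunOn w r }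

/-- A state is reachable if some run of `A` on some finite word ends in it. -/
def Reachable (A : NFA' σ Q) (q : Q) : Prop :=
  ∃ w r, A.IsRunOn w r ∧ r w.length = q

end NFA'


/-- The probability of the path `s, w₁, w₂, …, wₙ` in a Markov chain with
transition matrix `P`: the product `P(s,w₁) ⬝ P(w₁,w₂) ⋯ P(wₙ₋₁,wₙ)`. -/
def pathProb {S : Type*} (P : S → S → ℝ) : S → List S → ℝ
  | _, [] => 1
  | s, t :: w => P s t * pathProb P t w

/-- The edge relation of the product graph `G_{M ⊗ A}` on vertices `S × Q`. -/
def prodEdge {S Q : Type*} (P : S → S → ℝ) (A : NFA' S Q) (v w : S × Q) : Prop :=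
  0 < P v.1 w.1 ∧ w.2 ∈ A.step v.2 w.1

/-- The length-`n` prefix of an infinite word. -/
def prefixList {S : Type*} (x : ℕ → S) (n : ℕ) : List S :=
  List.ofFn fun i : Fin n => x i

/-- `μ` is the law `μ_s` of the trajectory of the Markov chain `P` started according
to `P(s,·)`: the measure of every cylinder is the corresponding path probability. -/
def IsMarkovLaw {S : Type*} [MeasurableSpace S]
    (P : S → S → ℝ) (s : S) (μ : MeasureTheory.Measure (ℕ → S)) : Prop :=
  ∀ w : List S, μ { x : ℕ → S | prefixList x w.length = w } = ENNReal.ofReal (pathProb P s w)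

lemma pathProb_nonneg {S : Type*} (P : S → S → ℝ) (hP0 : ∀ s t, 0 ≤ P s t) :
    ∀ (w : List S) (s : S), 0 ≤ pathProb P s w := by
  intro w
  induction w with
  | nil => intro s; simp [pathProb]
  | cons a w ih => intro s; exact mul_nonneg (hP0 s a) (ih a)

lemma reach_aux {S Q : Type*} (P : S → S → ℝ) (hP0 : ∀ s t, 0 ≤ P s t)
    (A : NFA' S Q) :
    ∀ (w : List S) (s : S) (q : Q) (r : ℕ → Q), r 0 = q →
      (∀ i (h : i < w.length), r (i + 1) ∈ A.step (r i) w[i]) →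
      0 < pathProb P s w →
      ∃ t, Relation.ReflTransGen (prodEdge P A) (s, q) (t, r w.length) := by
  intro w
  induction w with
  | nil =>
    intro s q r hr0 _ _
    refine ⟨s, ?_⟩
    simp only [List.length_nil, hr0]
    exact Relation.ReflTransGen.refl
  | cons a w ih =>
    intro s q r hr0 hstep hpos
    have hpp : pathProb P s (a :: w) = P s a * pathProb P a w := rfl
    rw [hpp] at hpos
    have hPa : 0 < P s a := by
      rcases (hP0 s a).lt_or_eq with h | h
      · exact h
      · exfalso; rw [← h] at hpos; simp at hpos
    have hrest : 0 < pathProb P a w := by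
      by_contra h
      push_neg at h
      nlinarith [pathProb_nonneg P hP0 w a]
    have hr1 : r 1 ∈ A.step q a := by
      have := hstep 0 (by simp)
      simpa [hr0] using this
    obtain ⟨t, ht⟩ := ih a (r 1) (fun i => r (i + 1)) rfl
      (fun i hi => by
        have := hstep (i + 1) (by simpa using Nat.succ_lt_succ hi)
        simpa using this) hrest
    refine ⟨t, Relation.ReflTransGen.head (show prodEdge P A (s, q) (a, r 1) from ⟨hPa, hr1⟩) ?_⟩
    simpa [List.length_cons] using ht

theorem stmt4 {S Q : Type*} [Fintype S] [Finite Q]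
    [MeasurableSpace S] [MeasurableSingletonClass S]
    (P : S → S → ℝ) (hP0 : ∀ s t, 0 ≤ P s t) (hP1 : ∀ s, ∑ t, P s t = 1)
    (A : NFA' S Q) (s : S) (q : Q)
    (μ : MeasureTheory.Measure (ℕ → S)) (hμ : IsMarkovLaw P s μ)
    (hdead : ∀ t p, p ∈ A.accept →
      ¬ Relation.ReflTransGen (prodEdge P A) (s, q) (t, p)) :
    μ { x : ℕ → S | ∃ n > 0, prefixList x n ∈ A.LangFrom q } = 0 := by
  have key : ∀ w ∈ A.LangFrom q, μ { x : ℕ → S | prefixList x w.length = w } = 0 := by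
    intro w hw
    obtain ⟨r, ⟨⟨hr0, hstep⟩, hacc⟩⟩ := hw
    have hr0' : r 0 = q := hr0
    have hpp : pathProb P s w = 0 := by
      by_contra h
      have hpos : 0 < pathProb P s w :=
        lt_of_le_of_ne (pathProb_nonneg P hP0 w s) (Ne.symm h)
      obtain ⟨t, ht⟩ := reach_aux P hP0 A w s q r hr0' hstep hpos
      exact hdead t (r w.length) hacc ht
    rw [hμ w, hpp]; simp
  have hsub : { x : ℕ → S | ∃ n > 0, prefixList x n ∈ A.LangFrom q } ⊆
      ⋃ w : {w : List S // w ∈ A.LangFrom q},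
        { x : ℕ → S | prefixList x (w : List S).length = w } := by
    intro x ⟨n, _, hn⟩
    refine Set.mem_iUnion.2 ⟨⟨prefixList x n, hn⟩, ?_⟩
    simp only [Set.mem_setOf_eq]
    have hlen : (prefixList x n).length = n := by simp [prefixList]
    rw [hlen]
  have : Countable {w : List S // w ∈ A.LangFrom q} := by
    have : Countable S := Finite.to_countable
    infer_instance
  refine MeasureTheory.measure_mono_null hsub (MeasureTheory.measure_iUnion_null fun w => key w w.2)
end

section
/- Let V be a finite set, let C be a V × V real matrix with all entries nonnegative, and let d be a vector indexed by V with all entries nonnegative. Suppose (i) there is a constant B such that every entry of the partial sum (I + C + C² + ⋯ + Cⁿ)d is at most B, for every n ∈ ℕ, and (ii) there exists m ∈ ℕ such that every entry of (I + C + ⋯ + C^m)d is strictly positive. Then Cⁿ converges to the zero matrix entrywise as n → ∞. -/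
open Filter

lemma stmt5_sum_mulVec {V : Type*} [Fintype V] {ι : Type*} (s : Finset ι)
    (A : ι → Matrix V V ℝ) (d : V → ℝ) (v : V) :
    ((∑ k ∈ s, A k).mulVec d) v = ∑ k ∈ s, ((A k).mulVec d) v := by
  simp [Matrix.mulVec, dotProduct, Finset.sum_apply, Finset.sum_apply', Matrix.sum_apply, Finset.sum_mul]
  rw [Finset.sum_comm]

theorem stmt5 {V : Type*} [Fintype V] [DecidableEq V]
    (C : Matrix V V ℝ) (d : V → ℝ)
    (hC : ∀ i j, 0 ≤ C i j) (hd : ∀ i, 0 ≤ d i)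
    (hbd : ∃ B : ℝ, ∀ n : ℕ, ∀ v : V,
      ((∑ k ∈ Finset.range (n + 1), C ^ k).mulVec d) v ≤ B)
    (hpos : ∃ m : ℕ, ∀ v : V,
      0 < ((∑ k ∈ Finset.range (m + 1), C ^ k).mulVec d) v) :
    ∀ i j, Tendsto (fun n : ℕ => (C ^ n) i j) atTop (nhds 0) := by
  obtain ⟨B, hB⟩ := hbd
  obtain ⟨m, hm⟩ := hpos
  set e : V → ℝ := (∑ k ∈ Finset.range (m + 1), C ^ k).mulVec d with he
  have hCpow : ∀ k : ℕ, ∀ i j, 0 ≤ (C ^ k) i j := by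
    intro k
    induction k with
    | zero =>
      intro i j
      rw [pow_zero, Matrix.one_apply]
      split <;> norm_num
    | succ k ih =>
      intro i j
      rw [pow_succ, Matrix.mul_apply]
      exact Finset.sum_nonneg fun l _ => mul_nonneg (ih i l) (hC l j)
  have hpd : ∀ k : ℕ, ∀ v, 0 ≤ ((C ^ k).mulVec d) v := fun k v =>
    Finset.sum_nonneg fun l _ => mul_nonneg (hCpow k v l) (hd l)
  -- sub-sum bound
  have hsub : ∀ n j : ℕ, ∀ v : V,
      ∑ k ∈ Finset.range n, ((C ^ (k + j)).mulVec d) v ≤ B := by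
    intro n j v
    have h1 : ∑ k ∈ Finset.range n, ((C ^ (k + j)).mulVec d) v
        = ∑ i ∈ Finset.Ico j (n + j), ((C ^ i).mulVec d) v := by
      rw [Finset.sum_Ico_eq_sum_range]
      simp [add_comm, Nat.add_sub_cancel]
    have h2 : ∑ i ∈ Finset.Ico j (n + j), ((C ^ i).mulVec d) v
        ≤ ∑ i ∈ Finset.range (n + j + 1), ((C ^ i).mulVec d) v := by
      apply Finset.sum_le_sum_of_subset_of_nonneg
      · intro x hx
        simp only [Finset.mem_Ico] at hx
        simp only [Finset.mem_range]
        omega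
      · intro x _ _; exact hpd x v
    calc ∑ k ∈ Finset.range n, ((C ^ (k + j)).mulVec d) v
        = ∑ i ∈ Finset.Ico j (n + j), ((C ^ i).mulVec d) v := h1
      _ ≤ ∑ i ∈ Finset.range (n + j + 1), ((C ^ i).mulVec d) v := h2
      _ ≤ B := by
          have := hB (n + j) v
          rwa [stmt5_sum_mulVec] at this
  -- key bound on partial sums of (C^k).mulVec e
  have key : ∀ (v : V) (n : ℕ),
      ∑ k ∈ Finset.range n, ((C ^ k).mulVec e) v ≤ (m + 1) * B := by
    intro v n
    have heq : ∀ k : ℕ, ((C ^ k).mulVec e) v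
        = ∑ j ∈ Finset.range (m + 1), ((C ^ (k + j)).mulVec d) v := by
      intro k
      rw [he, Matrix.mulVec_mulVec, Finset.mul_sum, stmt5_sum_mulVec]
      refine Finset.sum_congr rfl fun j _ => ?_
      rw [← pow_add]
    calc ∑ k ∈ Finset.range n, ((C ^ k).mulVec e) v
        = ∑ j ∈ Finset.range (m + 1), ∑ k ∈ Finset.range n,
            ((C ^ (k + j)).mulVec d) v := by
          simp only [heq]; rw [Finset.sum_comm]
      _ ≤ ∑ _j ∈ Finset.range (m + 1), B :=
          Finset.sum_le_sum fun j _ => hsub n j v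
      _ = (m + 1) * B := by simp [mul_comm]
  have hpe : ∀ k : ℕ, ∀ v, 0 ≤ ((C ^ k).mulVec e) v := fun k v =>
    Finset.sum_nonneg fun l _ => mul_nonneg (hCpow k v l) (le_of_lt (hm l))
  have hsummable : ∀ v : V, Summable fun k : ℕ => ((C ^ k).mulVec e) v :=
    fun v => summable_of_sum_range_le (fun k => hpe k v) (key v)
  have htend : ∀ v : V, Tendsto (fun k : ℕ => ((C ^ k).mulVec e) v) atTop (nhds 0) :=
    fun v => (hsummable v).tendsto_atTop_zero
  intro i j
  have hj : 0 < e j := hm j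
  have hdiv : Tendsto (fun n : ℕ => ((C ^ n).mulVec e) i / e j) atTop (nhds 0) := by
    simpa using (htend i).div_const (e j)
  apply tendsto_of_tendsto_of_tendsto_of_le_of_le tendsto_const_nhds hdiv
  · intro n; exact hCpow n i j
  · intro n
    rw [le_div_iff₀ hj]
    calc (C ^ n) i j * e j ≤ ∑ l, (C ^ n) i l * e l := by
          apply Finset.single_le_sum (f := fun l => (C ^ n) i l * e l)
          · intro l _; exact mul_nonneg (hCpow n i l) (le_of_lt (hm l))
          · exact Finset.mem_univ j
      _ = ((C ^ n).mulVec e) i := rfl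
end

section
/- Let A = (Σ, Q, Q0, δ, F) be an NBA with finite alphabet Σ and finite state set Q. For σ ∈ Σ and q ∈ Q, define G_{σ,q} = {w_1⋯w_k ∈ Σ^+ : w_k = σ and there is a sequence p_0, p_1, …, p_k with p_0 ∈ Q0, p_i ∈ δ(p_{i-1}, w_i) for 1 ≤ i ≤ k, and p_k = q}, and H_{σ,q} = {w_1⋯w_k ∈ Σ^+ : w_k = σ and there is a sequence p_0, p_1, …, p_k with p_0 = q, p_i ∈ δ(p_{i-1}, w_i) for 1 ≤ i ≤ k, and p_k = q}. Then L(A) = ⋃_{σ ∈ Σ, q ∈ F} G_{σ,q} · H_{σ,q}^ω, where G · H^ω = {u x : u ∈ G, x ∈ H^ω} and H^ω is the set of infinite words obtained by concatenating an infinite sequence of words from H. -/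
namespace NFA'

variable {σ Q : Type*}

/-- `r` is a run of the automaton on the infinite word `x`, starting in the set `S0`
(here `x i` is the `(i+1)`-st letter `w_{i+1}` of the word). -/
def IsInfRunFrom (A : NFA' σ Q) (S0 : Set Q) (x : ℕ → σ) (r : ℕ → Q) : Prop :=
  r 0 ∈ S0 ∧ ∀ i, r (i + 1) ∈ A.step (r i) (x i)

/-- `r` is an accepting (Büchi) run on `x` starting in `S0`: it visits `A.accept`
infinitely often. -/
def IsAccInfRunFrom (A : NFA' σ Q) (S0 : Set Q) (x : ℕ → σ) (r : ℕ → Q) : Prop :=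
  A.IsInfRunFrom S0 x r ∧ ∀ n, ∃ m ≥ n, r m ∈ A.accept

/-- The ω-language of the Büchi automaton `A`. -/
def BuchiLang (A : NFA' σ Q) : Set (ℕ → σ) :=
  { x | ∃ r, A.IsAccInfRunFrom A.start x r }

end NFA'

/-- `H^ω`: infinite words that split into blocks `x_{n_i+1} ⋯ x_{n_{i+1}}` all in `H`. -/
def omegaPow {σ : Type*} (H : Set (List σ)) : Set (ℕ → σ) :=
  { x | ∃ n : ℕ → ℕ, n 0 = 0 ∧ StrictMono n ∧
      ∀ i, (List.ofFn fun j : Fin (n (i + 1) - n i) => x (n i + j)) ∈ H }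

/-- The infinite word obtained by prefixing the infinite word `x` with the finite word `u`. -/
def appendInf {σ : Type*} (u : List σ) (x : ℕ → σ) : ℕ → σ :=
  fun k => if h : k < u.length then u[k] else x (k - u.length)

/-- `G_{a,q}`: nonempty finite words ending in the letter `a` that take `A` from
an initial state to `q`. -/
def Gset {σ Q : Type*} (A : NFA' σ Q) (a : σ) (q : Q) : Set (List σ) :=
  { w | w.getLast? = some a ∧
      ∃ r : ℕ → Q, r 0 ∈ A.start ∧
        (∀ i (h : i < w.length), r (i + 1) ∈ A.step (r i) w[i]) ∧ r w.length = q }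

/-- `H_{a,q}`: nonempty finite words ending in the letter `a` that take `A` from
`q` back to `q`. -/
def Hset {σ Q : Type*} (A : NFA' σ Q) (a : σ) (q : Q) : Set (List σ) :=
  { w | w.getLast? = some a ∧
      ∃ r : ℕ → Q, r 0 = q ∧
        (∀ i (h : i < w.length), r (i + 1) ∈ A.step (r i) w[i]) ∧ r w.length = q }

lemma exists_inf_fiber {α β : Type*} [Finite β] {s : Set α} (h : s.Infinite) (f : α → β) :
    ∃ b, {a ∈ s | f a = b}.Infinite := by
  by_contra hc
  push_neg at hc
  have hs : s = ⋃ b, {a ∈ s | f a = b} := by ext a; simp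
  exact h (hs ▸ Set.finite_iUnion hc)

lemma ofFn_getLast? {α : Type*} {k : ℕ} (hk : 0 < k) (f : Fin k → α) :
    (List.ofFn f).getLast? = some (f ⟨k - 1, by omega⟩) := by
  rw [List.getLast?_eq_getElem?]
  simp [List.getElem?_ofFn, List.ofFnNthVal, Nat.sub_lt hk]

lemma fwd {σ Q : Type*} [Finite σ] [Finite Q] (A : NFA' σ Q) (x : ℕ → σ)
    (hx : x ∈ A.BuchiLang) :
    ∃ a q, q ∈ A.accept ∧
      ∃ u ∈ Gset A a q, ∃ x' ∈ omegaPow (Hset A a q), x = appendInf u x' := by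
  obtain ⟨r, ⟨hr0, hstep⟩, hacc⟩ := hx
  -- the set of m with r (m+1) accepting is infinite
  have hS : {m : ℕ | r (m + 1) ∈ A.accept}.Infinite := by
    rw [Set.infinite_coe_iff.symm]
    rw [Set.infinite_coe_iff]
    apply Set.infinite_of_not_bddAbove
    rintro ⟨N, hN⟩
    obtain ⟨m, hm, hmem⟩ := hacc (N + 2)
    have hmm : m - 1 + 1 = m := by omega
    have : m - 1 ≤ N := hN (by simp only [Set.mem_setOf_eq, hmm]; exact hmem)
    omega
  obtain ⟨⟨q, a⟩, hT⟩ := exists_inf_fiber hS (fun m => (r (m + 1), x m))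
  set T : Set ℕ := {m ∈ {m : ℕ | r (m + 1) ∈ A.accept} | (r (m + 1), x m) = (q, a)} with hTdef
  have hmemT : ∀ m ∈ T, r (m + 1) ∈ A.accept ∧ r (m + 1) = q ∧ x m = a := by
    intro m hm
    obtain ⟨h1, h2⟩ := hm
    exact ⟨h1, congrArg Prod.fst h2, congrArg Prod.snd h2⟩
  have hgt : ∀ n : ℕ, ∃ b ∈ T, n < b := fun n => hT.exists_gt n
  choose f hfT hflt using hgt
  -- p i = (i-th chosen element) + 1 : positions where run is at q and prev letter is a
  set m : ℕ → ℕ := fun i => Nat.rec (f 0) (fun _ prev => f prev) i with hmdef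
  have hmT : ∀ i, m i ∈ T := by
    intro i; cases i with
    | zero => exact hfT 0
    | succ k => exact hfT _
  have hmlt : ∀ i, m i < m (i + 1) := fun i => hflt (m i)
  set p : ℕ → ℕ := fun i => m i + 1 with hpdef
  have hpq : ∀ i, r (p i) = q := fun i => (hmemT _ (hmT i)).2.1
  have hpa : ∀ i, x (p i - 1) = a := by
    intro i
    have := (hmemT _ (hmT i)).2.2
    simpa [hpdef] using this
  have hp1 : ∀ i, 1 ≤ p i := fun i => Nat.succ_le_succ (Nat.zero_le _)
  have hpmono : StrictMono p := by
    apply strictMono_nat_of_lt_succ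
    intro i
    exact Nat.succ_lt_succ (hmlt i)
  have hqacc : q ∈ A.accept := by
    have := (hmemT _ (hmT 0)).1
    rwa [(hmemT _ (hmT 0)).2.1] at this
  refine ⟨a, q, hqacc, List.ofFn (fun j : Fin (p 0) => x j), ?_,
    fun k => x (p 0 + k), ?_, ?_⟩
  · -- Gset
    refine ⟨?_, r, hr0, ?_, ?_⟩
    · rw [ofFn_getLast? (hp1 0)]
      exact congrArg some (hpa 0)
    · intro i hi
      simp only [List.length_ofFn] at hi
      rw [List.getElem_ofFn]
      exact hstep i
    · simpa using hpq 0
  · -- omegaPow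
    refine ⟨fun i => p i - p 0, by simp, ?_, ?_⟩
    · intro i j hij
      have h1 : p 0 ≤ p i := hpmono.le_iff_le.mpr (Nat.zero_le i)
      have h2 : p i < p j := hpmono hij
      show p i - p 0 < p j - p 0
      omega
    · intro i
      have h0i : p 0 ≤ p i := hpmono.le_iff_le.mpr (Nat.zero_le i)
      have hii : p i < p (i + 1) := hpmono (Nat.lt_succ_self i)
      have hlen : p (i + 1) - p 0 - (p i - p 0) = p (i + 1) - p i := by omega
      have hkpos : 0 < p (i + 1) - p i := by omega
      refine ⟨?_, fun k => r (p i + k), hpq i, ?_, ?_⟩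
      · rw [ofFn_getLast? (by rw [hlen]; exact hkpos)]
        refine congrArg some ?_
        show x (p 0 + (p i - p 0 + (p (i + 1) - p 0 - (p i - p 0) - 1))) = a
        have harg : p 0 + (p i - p 0 + (p (i + 1) - p 0 - (p i - p 0) - 1)) = p (i + 1) - 1 := by
          omega
        rw [harg]
        exact hpa (i + 1)
      · intro j hj
        simp only [List.length_ofFn] at hj
        rw [List.getElem_ofFn]
        show r (p i + j + 1) ∈ A.step (r (p i + j)) (x (p 0 + (p i - p 0 + ↑(⟨j, hj⟩ : Fin _))))
        have harg : p 0 + (p i - p 0 + j) = p i + j := by omega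
        simp only [Fin.val_mk]
        rw [harg]
        exact hstep (p i + j)
      · simp only [List.length_ofFn, hlen]
        have : p i + (p (i + 1) - p i) = p (i + 1) := by omega
        rw [this]
        exact hpq (i + 1)
  · -- equality of words
    funext k
    unfold appendInf
    simp only [List.length_ofFn]
    split
    · next h =>
      rw [List.getElem_ofFn]
    · next h =>
      refine congrArg x ?_
      omega

lemma bwd {σ Q : Type*} (A : NFA' σ Q) (a : σ) (q : Q) (hq : q ∈ A.accept)
    (u : List σ) (hu : u ∈ Gset A a q) (x : ℕ → σ) (hx : x ∈ omegaPow (Hset A a q)) :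
    appendInf u x ∈ A.BuchiLang := by
  obtain ⟨hulast, ru, hru0, hrustep, hruq⟩ := hu
  obtain ⟨n, hn0, hnmono, hblocks⟩ := hx
  have hupos : 0 < u.length := by
    rcases u with _ | _
    · simp at hulast
    · simp
  have hrun := fun i => (hblocks i).2
  choose rb hrb0 hrbstep hrbq using hrun
  simp only [List.length_ofFn] at hrbstep hrbq
  -- basic facts about n
  have hnlt : ∀ i, n i < n (i + 1) := fun i => hnmono (Nat.lt_succ_self i)
  have hnge : ∀ i, i ≤ n i := fun i => hnmono.le_apply
  -- the block index function
  set B : ℕ → ℕ := fun t => Nat.findGreatest (fun i => n i ≤ t) t with hBdef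
  have hB1 : ∀ t, n (B t) ≤ t := by
    intro t
    exact Nat.findGreatest_spec (P := fun i => n i ≤ t) (Nat.zero_le t) (by show n 0 ≤ t; rw [hn0]; exact Nat.zero_le t)
  have hB2 : ∀ t, t < n (B t + 1) := by
    intro t
    by_contra hcon
    push_neg at hcon
    have h1 : B t + 1 ≤ t := le_trans (hnge _) hcon
    have h2 : B t + 1 ≤ B t := Nat.le_findGreatest (P := fun i => n i ≤ t) h1 hcon
    omega
  have hBeq : ∀ t i, n i ≤ t → t < n (i + 1) → B t = i := by
    intro t i h1 h2
    have hle : i ≤ B t := Nat.le_findGreatest (P := fun j => n j ≤ t) (le_trans (hnge i) h1) h1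
    by_contra hne
    have : i + 1 ≤ B t := by omega
    have := hnmono.le_iff_le.mpr this
    have := hB1 t
    omega
  -- the combined run
  set R : ℕ → Q := fun k => if k < u.length then ru k
    else rb (B (k - u.length)) (k - u.length - n (B (k - u.length))) with hRdef
  have hRblock : ∀ i t, n i ≤ t → t ≤ n (i + 1) → R (u.length + t) = rb i (t - n i) := by
    intro i t h1 h2
    have hnot : ¬ (u.length + t < u.length) := by omega
    have hsub : u.length + t - u.length = t := by omega
    rcases eq_or_lt_of_le h2 with heq | hlt
    · -- t = n (i+1) : boundary
      have hBt : B t = i + 1 := hBeq t (i + 1) (le_of_eq heq.symm) (heq ▸ hnlt (i + 1))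
      simp only [hRdef, hnot, if_false, hsub, hBt]
      have e1 : t - n (i + 1) = 0 := by omega
      rw [e1, hrb0]
      have e2 : t - n i = n (i + 1) - n i := by omega
      rw [e2, hrbq]
    · have hBt : B t = i := hBeq t i h1 hlt
      simp only [hRdef, hnot, if_false, hsub, hBt]
  have hRu : ∀ k, k ≤ u.length → R k = ru k := by
    intro k hk
    rcases eq_or_lt_of_le hk with heq | hlt
    · subst heq
      have : R (u.length + 0) = rb 0 (0 - n 0) := hRblock 0 0 (le_of_eq hn0) (by omega)
      simp only [Nat.add_zero] at this
      rw [this, hn0, Nat.sub_zero, hrb0, ← hruq]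
    · simp [hRdef, hlt]
  refine ⟨R, ⟨?_, ?_⟩, ?_⟩
  · rw [hRu 0 (Nat.zero_le _)]; exact hru0
  · intro k
    rcases lt_or_ge k u.length with hk | hk
    · rw [hRu k (le_of_lt hk), hRu (k + 1) hk]
      have : appendInf u x k = u[k] := by simp [appendInf, hk]
      rw [this]
      exact hrustep k hk
    · set t := k - u.length with htdef
      have hkt : k = u.length + t := by omega
      set i := B t with hidef
      have h1 : n i ≤ t := hB1 t
      have h2 : t < n (i + 1) := hB2 t
      have hx1 : appendInf u x k = x t := by simp [appendInf, htdef]; omega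
      rw [hx1, hkt]
      show R (u.length + (t + 1)) ∈ A.step (R (u.length + t)) (x t)
      rw [hRblock i t h1 (le_of_lt h2), hRblock i (t + 1) (by omega) h2]
      have e1 : t + 1 - n i = (t - n i) + 1 := by omega
      rw [e1]
      have hj : t - n i < n (i + 1) - n i := by omega
      have := hrbstep i (t - n i) hj
      rw [List.getElem_ofFn] at this
      have e2 : n i + (t - n i) = t := by omega
      simp only [Fin.val_mk] at this
      rwa [e2] at this
  · intro N
    refine ⟨u.length + n N, by have := hnge N; omega, ?_⟩
    rw [hRblock N (n N) le_rfl (le_of_lt (hnlt N)), Nat.sub_self, hrb0]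
    exact hq

theorem stmt7 {σ Q : Type*} [Finite σ] [Finite Q] (A : NFA' σ Q) :
    A.BuchiLang =
      ⋃ (a : σ) (q ∈ A.accept),
        { y | ∃ u ∈ Gset A a q, ∃ x ∈ omegaPow (Hset A a q), y = appendInf u x } := by
  ext x
  simp only [Set.mem_iUnion, Set.mem_setOf_eq]
  constructor
  · intro hx
    obtain ⟨a, q, hq, u, hu, x', hx', hEq⟩ := fwd A x hx
    exact ⟨a, q, hq, u, hu, x', hx', hEq⟩
  · rintro ⟨a, q, hq, u, hu, x', hx', rfl⟩
    exact bwd A a q hq u hu x' hx'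
end

section
/- Let S be a finite set, P : S × S → [0,1] a stochastic matrix, s ∈ S, and H ⊆ S^+ a set of nonempty finite words over S such that every word in H has last letter s. If μ_s({x ∈ S^ω : some nonempty finite prefix of x belongs to H}) = 1, then μ_s(S^ω \ H^ω) = 0, i.e., almost every trajectory lies in H^ω. -/
/-
Call a time `n` a return time of a trajectory `x` if `n = 0` or `x (n - 1) = s`. If from every
return time the remaining trajectory has a nonempty prefix in `H`, then cutting greedily at such
prefixes splits `x` into blocks of `H`; each block ends with `s`, so every cut is again a return
time, and `x ∈ H^ω`. On the other hand, the Markov property at a return time `n` says that, given a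
prefix `w` of length `n` ending in `s`, the shifted trajectory is again distributed as `μ_s`. So
the event "`x` starts with `w` and no prefix of the shift lies in `H`" has probability
`μ_s(cyl w) ⬝ μ_s(no prefix in H) = 0`, and a countable union over `w` is still null.
-/

open MeasureTheory Set

namespace MarkovChain

variable {S : Type*}

def shift (n : ℕ) (x : ℕ → S) : ℕ → S := fun i => x (n + i)

def cyl (w : List S) : Set (ℕ → S) := {x | prefixList x w.length = w}

def hasPrefixIn (H : Set (List S)) : Set (ℕ → S) := {x | ∃ k > 0, prefixList x k ∈ H}

theorem length_prefixList (x : ℕ → S) (n : ℕ) : (prefixList x n).length = n :=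
  List.length_ofFn

theorem mem_cyl_prefixList (x : ℕ → S) (n : ℕ) : x ∈ cyl (prefixList x n) := by
  rw [cyl, mem_ofPred_eq, length_prefixList]

theorem prefixList_add (x : ℕ → S) (m n : ℕ) :
    prefixList x (m + n) = prefixList x m ++ prefixList (shift m x) n :=
  List.ofFn_add

theorem take_prefixList (x : ℕ → S) {m n : ℕ} (h : m ≤ n) :
    (prefixList x n).take m = prefixList x m := by
  obtain ⟨k, rfl⟩ := Nat.exists_eq_add_of_le h
  rw [prefixList_add, List.take_left' (length_prefixList x m)]

theorem cyl_eq_preimage (w : List S) :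
    cyl w = (fun x (i : Fin w.length) => x i) ⁻¹' {w.get} := by
  ext x
  change _ ↔ (fun i : Fin w.length => x i) = w.get
  rw [← List.ofFn_inj, List.ofFn_get]
  rfl

theorem cyl_inter_preimage_shift (w v : List S) :
    cyl w ∩ shift w.length ⁻¹' cyl v = cyl (w ++ v) := by
  ext x
  simp only [cyl, mem_inter_iff, mem_preimage, mem_ofPred_eq, List.length_append, prefixList_add]
  constructor
  · rintro ⟨hw, hv⟩
    rw [hw, hv]
  · exact fun h => List.append_inj h (length_prefixList x w.length)

theorem mem_cyl_singleton {x : ℕ → S} {t : S} : x ∈ cyl [t] ↔ x 0 = t := by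
  simp [cyl, prefixList]

theorem cyl_subset_cyl {w v : List S} (h : w.length ≤ v.length)
    (hwv : (cyl w ∩ cyl v).Nonempty) : cyl v ⊆ cyl w := by
  obtain ⟨x, hxw, hxv⟩ := hwv
  intro y hy
  change prefixList y w.length = w
  rw [← take_prefixList y h, show prefixList y v.length = v from hy, ← hxv, take_prefixList x h]
  exact hxw

theorem isPiSystem_range_cyl : IsPiSystem (range (cyl (S := S))) := by
  rintro _ ⟨w, rfl⟩ _ ⟨v, rfl⟩ hwv
  rcases le_total w.length v.length with h | h
  · exact ⟨v, (inter_eq_right.2 (cyl_subset_cyl h hwv)).symm⟩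
  · exact ⟨w, (inter_eq_left.2 (cyl_subset_cyl h (inter_comm _ _ ▸ hwv))).symm⟩

theorem setOf_apply_eq_eq_iUnion_cyl (i : ℕ) (t : S) :
    {x : ℕ → S | x i = t} = ⋃ (w : List S) (_ : w.length = i), cyl (w ++ [t]) := by
  ext x
  simp only [mem_ofPred_eq, mem_iUnion, ← cyl_inter_preimage_shift, mem_inter_iff, mem_preimage,
    mem_cyl_singleton, exists_prop]
  constructor
  · intro hx
    exact ⟨prefixList x i, length_prefixList x i, mem_cyl_prefixList x i, by
      simpa [length_prefixList, shift] using hx⟩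
  · rintro ⟨w, rfl, -, hx⟩
    simpa [shift] using hx

theorem pathProb_nonneg {P : S → S → ℝ} (hP0 : ∀ s t, 0 ≤ P s t) (s : S) (w : List S) :
    0 ≤ pathProb P s w := by
  induction w generalizing s with
  | nil => exact zero_le_one
  | cons t w ih => exact mul_nonneg (hP0 s t) (ih t)

theorem pathProb_append (P : S → S → ℝ) (s : S) (w v : List S) :
    pathProb P s (w ++ v) = pathProb P s w * pathProb P (w.getLastD s) v := by
  induction w generalizing s with
  | nil => simp [pathProb]
  | cons t w ih => simp only [List.cons_append, pathProb, ih, List.getLastD_cons, mul_assoc]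

theorem getLastD_prefixList_add {x : ℕ → S} {s : S} {m n : ℕ}
    (h : (prefixList (shift m x) n).getLast? = some s) :
    (prefixList x (m + n)).getLastD s = s := by
  simp [List.getLastD_eq_getLast?, prefixList_add, h]

-- `(prefixList x n).getLastD s = s` says that `n = 0` or `x (n - 1) = s`.
theorem mem_omegaPow_of_forall_shift_mem_hasPrefixIn {H : Set (List S)} {s : S} {x : ℕ → S}
    (hH : ∀ w ∈ H, w.getLast? = some s)
    (hx : ∀ n, (prefixList x n).getLastD s = s → shift n x ∈ hasPrefixIn H) :
    x ∈ omegaPow H := by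
  choose! k hk_pos hk_mem using hx
  set n : ℕ → ℕ := fun i => (fun m => m + k m)^[i] 0
  have hn_succ (i : ℕ) : n (i + 1) = n i + k (n i) := Function.iterate_succ_apply' _ _ _
  have hn_cut (i : ℕ) : (prefixList x (n i)).getLastD s = s := by
    induction i with
    | zero => rfl
    | succ i ih => rw [hn_succ]; exact getLastD_prefixList_add (hH _ (hk_mem _ ih))
  refine ⟨n, rfl, strictMono_nat_of_lt_succ fun i => ?_, fun i => ?_⟩
  · rw [hn_succ]
    exact Nat.lt_add_of_pos_right (hk_pos _ (hn_cut i))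
  · change prefixList (shift (n i) x) (n (i + 1) - n i) ∈ H
    rw [hn_succ, Nat.add_sub_cancel_left]
    exact hk_mem _ (hn_cut i)

theorem compl_omegaPow_subset {H : Set (List S)} {s : S} (hH : ∀ w ∈ H, w.getLast? = some s) :
    (omegaPow H)ᶜ ⊆ ⋃ (w : List S) (_ : w.getLastD s = s),
      cyl w ∩ shift w.length ⁻¹' (hasPrefixIn H)ᶜ := by
  intro x hx
  obtain ⟨n, hn_cut, hn⟩ :
      ∃ n, (prefixList x n).getLastD s = s ∧ shift n x ∉ hasPrefixIn H := by
    by_contra! h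
    exact hx (mem_omegaPow_of_forall_shift_mem_hasPrefixIn hH h)
  exact mem_iUnion₂.2 ⟨prefixList x n, hn_cut, mem_cyl_prefixList x n,
    by rwa [mem_preimage, length_prefixList]⟩

section Measure

variable [MeasurableSpace S]

theorem measurable_shift (n : ℕ) : Measurable (shift (S := S) n) :=
  measurable_pi_lambda _ fun i => measurable_pi_apply (n + i)

variable {P : S → S → ℝ} {s : S} {μ : Measure (ℕ → S)}

theorem _root_.IsMarkovLaw.measure_cyl (hμ : IsMarkovLaw P s μ) (w : List S) :
    μ (cyl w) = ENNReal.ofReal (pathProb P s w) :=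
  hμ w

theorem _root_.IsMarkovLaw.isProbabilityMeasure (hμ : IsMarkovLaw P s μ) :
    IsProbabilityMeasure μ :=
  ⟨by simpa [cyl, pathProb, prefixList] using hμ.measure_cyl []⟩

variable [MeasurableSingletonClass S]

theorem measurableSet_cyl (w : List S) : MeasurableSet (cyl w) := by
  rw [cyl_eq_preimage]
  exact measurable_pi_lambda _ (fun i => measurable_pi_apply _) (measurableSet_singleton _)

theorem measurableSet_hasPrefixIn [Countable S] (H : Set (List S)) :
    MeasurableSet (hasPrefixIn H) := by
  have : hasPrefixIn H = ⋃ w ∈ {w | w ∈ H ∧ w ≠ []}, cyl w := by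
    ext x
    simp only [hasPrefixIn, mem_ofPred_eq, mem_iUnion, exists_prop]
    constructor
    · rintro ⟨k, hk, hx⟩
      exact ⟨prefixList x k, ⟨hx, by simp [← List.length_pos_iff, length_prefixList, hk]⟩,
        mem_cyl_prefixList x k⟩
    · rintro ⟨w, ⟨hw, hw_ne⟩, hx⟩
      exact ⟨w.length, List.length_pos_iff.2 hw_ne, hx.symm ▸ hw⟩
  rw [this]
  exact MeasurableSet.biUnion (to_countable _) fun w _ => measurableSet_cyl w

theorem generateFrom_range_cyl [Countable S] :
    MeasurableSpace.generateFrom (range (cyl (S := S))) = MeasurableSpace.pi := by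
  refine le_antisymm (MeasurableSpace.generateFrom_le (forall_mem_range.2 measurableSet_cyl)) ?_
  rw [MeasurableSpace.pi_eq_generateFrom_projections]
  refine MeasurableSpace.generateFrom_le ?_
  rintro _ ⟨i, A, -, rfl⟩
  have : Function.eval i ⁻¹' A = ⋃ t ∈ A, {x : ℕ → S | x i = t} := by ext; simp
  rw [this]
  refine .biUnion A.to_countable fun t _ => ?_
  rw [setOf_apply_eq_eq_iUnion_cyl]
  exact .iUnion fun w => .iUnion fun _ =>
    MeasurableSpace.measurableSet_generateFrom (mem_range_self _)

theorem _root_.IsMarkovLaw.map_shift_restrict_cyl [Countable S] (hP0 : ∀ s t, 0 ≤ P s t)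
    (hμ : IsMarkovLaw P s μ) {w : List S} (hw : w.getLastD s = s) :
    (μ.restrict (cyl w)).map (shift w.length) = μ (cyl w) • μ := by
  have := hμ.isProbabilityMeasure
  refine ext_of_generate_finite _ generateFrom_range_cyl.symm isPiSystem_range_cyl ?_ ?_
  · rintro _ ⟨v, rfl⟩
    rw [Measure.map_apply (measurable_shift _) (measurableSet_cyl v),
      Measure.restrict_apply (measurable_shift _ (measurableSet_cyl v)), inter_comm,
      cyl_inter_preimage_shift, Measure.smul_apply, smul_eq_mul, hμ.measure_cyl, hμ.measure_cyl,
      hμ.measure_cyl, pathProb_append, hw, ENNReal.ofReal_mul (pathProb_nonneg hP0 s w)]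
  · rw [Measure.map_apply (measurable_shift _) MeasurableSet.univ, preimage_univ,
      Measure.restrict_apply MeasurableSet.univ, univ_inter, Measure.smul_apply, measure_univ,
      smul_eq_mul, mul_one]

theorem _root_.IsMarkovLaw.measure_cyl_inter_preimage_shift [Countable S]
    (hP0 : ∀ s t, 0 ≤ P s t) (hμ : IsMarkovLaw P s μ) {w : List S} (hw : w.getLastD s = s)
    {B : Set (ℕ → S)} (hB : MeasurableSet B) :
    μ (cyl w ∩ shift w.length ⁻¹' B) = μ (cyl w) * μ B := by
  rw [inter_comm, ← Measure.restrict_apply (measurable_shift _ hB),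
    ← Measure.map_apply (measurable_shift _) hB, hμ.map_shift_restrict_cyl hP0 hw,
    Measure.smul_apply, smul_eq_mul]

end Measure

end MarkovChain

open MarkovChain

theorem stmt9_general {S : Type*} [Fintype S] [MeasurableSpace S] [MeasurableSingletonClass S]
    (P : S → S → ℝ) (hP0 : ∀ s t, 0 ≤ P s t)
    (s : S) (μ : MeasureTheory.Measure (ℕ → S)) (hμ : IsMarkovLaw P s μ)
    (H : Set (List S)) (hH : ∀ w ∈ H, w.getLast? = some s)
    (hone : μ { x : ℕ → S | ∃ k > 0, prefixList x k ∈ H } = 1) :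
    μ (omegaPow H)ᶜ = 0 := by
  have := hμ.isProbabilityMeasure
  have hE := measurableSet_hasPrefixIn H
  have hnull : μ (hasPrefixIn H)ᶜ = 0 := (prob_compl_eq_zero_iff hE).2 hone
  refine measure_mono_null (compl_omegaPow_subset hH)
    (measure_iUnion_null fun w => measure_iUnion_null fun hw => ?_)
  rw [hμ.measure_cyl_inter_preimage_shift hP0 hw hE.compl, hnull, mul_zero]

theorem stmt9 {S : Type*} [Fintype S] [MeasurableSpace S] [MeasurableSingletonClass S]
    (P : S → S → ℝ) (hP0 : ∀ s t, 0 ≤ P s t) (hP1 : ∀ s, ∑ t, P s t = 1)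
    (s : S) (μ : MeasureTheory.Measure (ℕ → S)) (hμ : IsMarkovLaw P s μ)
    (H : Set (List S)) (hH : ∀ w ∈ H, w.getLast? = some s)
    (hone : μ { x : ℕ → S | ∃ k > 0, prefixList x k ∈ H } = 1) :
    μ (omegaPow H)ᶜ = 0 :=
  stmt9_general P hP0 s μ hμ H hH hone
end

section
/- Let A = (Σ, Q, Q0, δ, F) be an unambiguous NBA and let q ∈ Q. Suppose (i) q is reachable, i.e., there is a finite word u = u_1⋯u_j and a sequence p_0, …, p_j with p_0 ∈ Q0, p_i ∈ δ(p_{i-1}, u_i), and p_j = q, and (ii) some infinite word is accepted from q, i.e., there is an infinite word z = z_1 z_2 ⋯ and a sequence r_0, r_1, … with r_0 = q, r_i ∈ δ(r_{i-1}, z_i) for all i ≥ 1, and r_i ∈ F for infinitely many i. Then for every nonempty finite word w = w_1⋯w_k ∈ Σ^+ there is at most one sequence q = p_0, p_1, …, p_k = q with p_i ∈ δ(p_{i-1}, w_i) for 1 ≤ i ≤ k; that is, there is at most one path from q back to q labelled by w. -/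
namespace NFA'

/-- `A` is unambiguous as a Büchi automaton: every infinite word has at most one
accepting run. -/
def BuchiUnambiguous {σ Q : Type*} (A : NFA' σ Q) : Prop :=
  ∀ (x : ℕ → σ) (r₁ r₂ : ℕ → Q),
    A.IsAccInfRunFrom A.start x r₁ → A.IsAccInfRunFrom A.start x r₂ → r₁ = r₂

end NFA'

theorem stmt12 {σ Q : Type*} [Finite σ] [Finite Q] (A : NFA' σ Q)
    (hA : A.BuchiUnambiguous) (q : Q)
    (hreach : A.Reachable q)
    (hlive : ∃ (z : ℕ → σ) (r : ℕ → Q), A.IsAccInfRunFrom {q} z r) :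
    ∀ w : List σ, w ≠ [] →
      ∀ p₁ p₂ : ℕ → Q,
        (p₁ 0 = q ∧ (∀ i (h : i < w.length), p₁ (i + 1) ∈ A.step (p₁ i) w[i]) ∧
          p₁ w.length = q) →
        (p₂ 0 = q ∧ (∀ i (h : i < w.length), p₂ (i + 1) ∈ A.step (p₂ i) w[i]) ∧
          p₂ w.length = q) →
        ∀ i ≤ w.length, p₁ i = p₂ i := by
  classical
  obtain ⟨u, ρ, hρ, hρend⟩ := hreach
  obtain ⟨z, r, hr⟩ := hlive
  intro w hw p₁ p₂ hp₁ hp₂ i hi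
  have hr0 : r 0 = q := hr.1.1
  set m := u.length with hm
  set k := w.length with hk
  have hk1 : 0 < k := List.length_pos_iff.mpr hw
  let x : ℕ → σ := fun i =>
    if h : i < m then u[i] else if h2 : i - m < k then w[i - m] else z (i - m - k)
  let R : (ℕ → Q) → ℕ → Q := fun p i =>
    if i < m then ρ i else if i < m + k then p (i - m) else r (i - m - k)
  have hrun : ∀ p : ℕ → Q,
      (p 0 = q ∧ (∀ j (h : j < k), p (j + 1) ∈ A.step (p j) w[j]) ∧ p k = q) →
      A.IsAccInfRunFrom A.start x (R p) := by
    rintro p ⟨h0, hstep, hend⟩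
    refine ⟨⟨?_, ?_⟩, ?_⟩
    · show (if 0 < m then ρ 0 else if 0 < m + k then p (0 - m) else r (0 - m - k)) ∈ A.start
      by_cases h : 0 < m
      · simpa [h] using hρ.1
      · have hm0 : m = 0 := by omega
        have : p 0 = ρ 0 := by
          rw [h0, ← hρend]; exact congrArg ρ hm0
        simp only [if_neg h, if_pos (by omega : 0 < m + k)]
        simpa [this] using hρ.1
    · intro j
      show (if j + 1 < m then ρ (j+1) else if j + 1 < m + k then p (j + 1 - m) else r (j + 1 - m - k))
          ∈ A.step (if j < m then ρ j else if j < m + k then p (j - m) else r (j - m - k)) (x j)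
      rcases lt_or_ge j m with hj | hj
      · -- x j = u[j]
        have hx : x j = u[j] := by simp only [x, dif_pos hj]
        rw [hx, if_pos hj]
        rcases lt_or_eq_of_le (Nat.succ_le_of_lt hj) with h1 | h1
        · rw [if_pos h1]; exact hρ.2 j hj
        · rw [if_neg (by omega), if_pos (by omega)]
          have e1 : j + 1 - m = 0 := by omega
          have e2 : p 0 = ρ (j + 1) := by rw [h0, ← hρend]; exact congrArg ρ h1.symm
          rw [e1, e2]; exact hρ.2 j hj
      · rcases lt_or_ge j (m + k) with hj2 | hj2
        · have hjm : j - m < k := by omega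
          have hx : x j = w[j - m] := by
            simp only [x, dif_neg (by omega : ¬ j < m), dif_pos hjm]
          rw [hx, if_neg (by omega), if_pos hj2]
          rcases lt_or_eq_of_le (Nat.succ_le_of_lt hj2) with h1 | h1
          · rw [if_neg (by omega), if_pos h1]
            have e : j + 1 - m = (j - m) + 1 := by omega
            rw [e]; exact hstep (j - m) hjm
          · rw [if_neg (by omega), if_neg (by omega)]
            have e1 : j + 1 - m - k = 0 := by omega
            have e2 : r 0 = p ((j - m) + 1) := by
              rw [hr0, ← hend]; congr 1; omega
            rw [e1, e2]; exact hstep (j - m) hjm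
        · have hx : x j = z (j - m - k) := by
            simp only [x, dif_neg (by omega : ¬ j < m), dif_neg (by omega : ¬ j - m < k)]
          rw [hx, if_neg (by omega), if_neg (by omega), if_neg (by omega), if_neg (by omega)]
          have e : j + 1 - m - k = (j - m - k) + 1 := by omega
          rw [e]; exact hr.1.2 (j - m - k)
    · intro n
      obtain ⟨n', hn', hacc⟩ := hr.2 n
      refine ⟨n' + (m + k), by omega, ?_⟩
      show (if n' + (m+k) < m then ρ _ else if n' + (m+k) < m + k then p _ else r (n' + (m+k) - m - k)) ∈ A.accept
      rw [if_neg (by omega), if_neg (by omega)]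
      have e : n' + (m + k) - m - k = n' := by omega
      rw [e]; exact hacc
  have hR := hA x (R p₁) (R p₂) (hrun p₁ hp₁) (hrun p₂ hp₂)
  rcases lt_or_eq_of_le hi with h1 | h1
  · have := congrFun hR (m + i)
    simpa [R, if_neg (by omega : ¬ m + i < m), if_pos (by omega : m + i < m + k),
      Nat.add_sub_cancel_left, if_pos h1] using this
  · rw [h1, hp₁.2.2, hp₂.2.2]
end
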